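/- The map T ↦ {L(T) : T ∈ T with at least one edge} is a bijection between the set of complete tubings of G and the set of admissible tubings of L(G). -/

import Mathlib

/-!
Sending a tube `T` with an edge to `L(T)` identifies the tubes of `G` with at least one edge with
the induced tubes of `L(G)`; the inverse takes a set of edges to the subgraph they span. Two such
tubes overlap exactly when their line graphs are incompatible, because a common vertex yields an
edge of each tube through it, and these two edges are either adjacent in `L(G)` or equal. The
remaining tubes are single vertices, which overlap nothing and so lie in every complete tubing.
Hence maximality transfers in both directions and the two constructions are mutually inverse.
-/

open SimpleGraph

namespace Cosmo

variable {V : Type*}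

/-- A tube of `G` is a connected subgraph. -/
def IsTube (G : SimpleGraph V) (T : G.Subgraph) : Prop := T.Connected

/-- Tubes are nested if one contains the other. -/
def Nested {G : SimpleGraph V} (S T : G.Subgraph) : Prop := S ≤ T ∨ T ≤ S

/-- Tubes overlap if their (vertex) intersection is nonempty and they are not nested. -/
def Overlapping {G : SimpleGraph V} (S T : G.Subgraph) : Prop :=
  (S.verts ∩ T.verts).Nonempty ∧ ¬ Nested S T

/-- Tubes are incompatible if there is an edge of `G` between them and they are not nested. -/
def Incompatible {G : SimpleGraph V} (S T : G.Subgraph) : Prop :=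
  (∃ u w, G.Adj u w ∧ u ∈ S.verts ∧ w ∈ T.verts) ∧ ¬ Nested S T

/-- Tubes are compatible if they are not incompatible. -/
def Compatible {G : SimpleGraph V} (S T : G.Subgraph) : Prop := ¬ Incompatible S T

/-- A complete tubing: a maximal collection of pairwise non-overlapping tubes. -/
def IsCompleteTubing (G : SimpleGraph V) (𝒯 : Set G.Subgraph) : Prop :=
  Maximal (fun 𝒞 : Set G.Subgraph =>
    (∀ T ∈ 𝒞, IsTube G T) ∧ 𝒞.Pairwise fun S T => ¬ Overlapping S T) 𝒯

/-- An admissible tubing: a maximal collection of pairwise compatible induced tubes. -/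
def IsAdmissibleTubing (G : SimpleGraph V) (𝒯 : Set G.Subgraph) : Prop :=
  Maximal (fun 𝒞 : Set G.Subgraph =>
    (∀ T ∈ 𝒞, IsTube G T ∧ T.IsInduced) ∧ 𝒞.Pairwise Compatible) 𝒯

/-- A labeling of an admissible tubing by the vertices, as in the bijection lemma:
`g v` is the tube associated to `v`, i.e. `v ∈ g v` and `v` avoids all strictly
smaller tubes of the tubing. -/
def IsVertexLabeling (G : SimpleGraph V) (𝒯 : Set G.Subgraph) (g : V → G.Subgraph) : Prop :=
  Set.BijOn g Set.univ 𝒯 ∧ ∀ v, v ∈ (g v).verts ∧ ∀ S ∈ 𝒯, S < g v → v ∉ S.verts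


/-- The induced subgraph of the line graph `L(G)` on the edges of a subgraph `T` of `G`. -/
def lineSubgraph {V : Type*} (G : SimpleGraph V) (T : G.Subgraph) : (G.lineGraph).Subgraph where
  verts := {e | (e : Sym2 V) ∈ T.edgeSet}
  Adj e f := (e : Sym2 V) ∈ T.edgeSet ∧ (f : Sym2 V) ∈ T.edgeSet ∧ (G.lineGraph).Adj e f
  adj_sub h := h.2.2
  edge_vert h := h.1
  symm := ⟨fun e f h => ⟨h.2.1, h.1, h.2.2.symm⟩⟩

end Cosmo

section MaximalPairwise

variable {α : Type*} {P : α → Prop} {r : α → α → Prop}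

theorem maximal_pairwise_iff (hsymm : ∀ x y, r x y → r y x) (hrefl : ∀ x, r x x) {s : Set α} :
    Maximal (fun c : Set α => (∀ x ∈ c, P x) ∧ c.Pairwise r) s ↔
      (∀ x ∈ s, P x) ∧ (∀ x ∈ s, ∀ y ∈ s, r x y) ∧
        ∀ x, P x → (∀ y ∈ s, r x y) → x ∈ s := by
  have pairwise_iff (c : Set α) : c.Pairwise r ↔ ∀ x ∈ c, ∀ y ∈ c, r x y :=
    ⟨fun h x hx y hy => (eq_or_ne x y).elim (· ▸ hrefl x) (h hx hy),
      fun h x hx y hy _ => h x hx y hy⟩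
  simp only [Maximal, pairwise_iff, and_assoc]
  refine ⟨fun ⟨hP, hr, hmax⟩ => ⟨hP, hr, fun x hx hxs => ?_⟩,
    fun ⟨hP, hr, hmax⟩ => ⟨hP, hr, fun t ⟨htP, htr⟩ hst x hx =>
      hmax x (htP x hx) fun y hy => htr x hx y (hst hy)⟩⟩
  refine hmax (y := insert x s) ⟨Set.forall_mem_insert.2 ⟨hx, hP⟩, ?_⟩ (Set.subset_insert x s)
    (Set.mem_insert x s)
  simp only [Set.forall_mem_insert]
  exact ⟨⟨hrefl x, hxs⟩, fun y hy => ⟨hsymm x y (hxs y hy), hr y hy⟩⟩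

end MaximalPairwise

namespace SimpleGraph.Subgraph

variable {V : Type*} {G : SimpleGraph V} {T : G.Subgraph} {v : V}

theorem Preconnected.exists_adj_of_verts_nontrivial (hT : T.Preconnected)
    (hnt : T.verts.Nontrivial) (hv : v ∈ T.verts) : ∃ u, T.Adj v u :=
  haveI := hnt.coe_sort
  hT.exists_adj_of_nontrivial ⟨v, hv⟩

theorem Connected.exists_eq_singletonSubgraph (hT : T.Connected)
    (he : ¬T.edgeSet.Nonempty) : ∃ v, T = G.singletonSubgraph v := by
  obtain ⟨v, hv⟩ := hT.nonempty
  refine ⟨v, (eq_singletonSubgraph_iff_verts_eq T).2 (by_contra fun hne => ?_)⟩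
  obtain ⟨u, hu⟩ := hT.preconnected.exists_adj_of_verts_nontrivial
    ((Set.nontrivial_iff_ne_singleton hv).2 hne) hv
  exact he ⟨s(v, u), Subgraph.mem_edgeSet.2 hu⟩

theorem Connected.exists_mem_edgeSet_of_mem_verts (hT : T.Connected)
    (he : T.edgeSet.Nonempty) (hv : v ∈ T.verts) : ∃ e ∈ T.edgeSet, v ∈ e := by
  obtain ⟨⟨a, b⟩, hab⟩ := he
  have hab : T.Adj a b := hab
  obtain ⟨u, hu⟩ := hT.preconnected.exists_adj_of_verts_nontrivial
    ⟨a, hab.fst_mem, b, hab.snd_mem, hab.ne⟩ hv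
  exact ⟨s(v, u), Subgraph.mem_edgeSet.2 hu, Sym2.mem_mk_left v u⟩

end SimpleGraph.Subgraph

namespace Cosmo

open Subgraph

variable {V : Type*}

section Tubes

variable {G : SimpleGraph V} {S T U₁ U₂ : G.Subgraph}

theorem Nested.symm (h : Nested S T) : Nested T S := Or.symm h

theorem nested_refl (S : G.Subgraph) : Nested S S := Or.inl le_rfl

theorem Overlapping.symm (h : Overlapping S T) : Overlapping T S :=
  ⟨Set.inter_comm S.verts T.verts ▸ h.1, fun hn => h.2 hn.symm⟩

theorem not_overlapping_self (S : G.Subgraph) : ¬Overlapping S S :=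
  fun h => h.2 (nested_refl S)

theorem Compatible.symm (h : Compatible S T) : Compatible T S :=
  fun ⟨⟨u, w, hadj, hu, hw⟩, hn⟩ => h ⟨⟨w, u, hadj.symm, hw, hu⟩, fun hn' => hn hn'.symm⟩

theorem compatible_self (S : G.Subgraph) : Compatible S S :=
  fun h => h.2 (nested_refl S)

theorem isCompleteTubing_iff {𝒯 : Set G.Subgraph} :
    IsCompleteTubing G 𝒯 ↔ (∀ T ∈ 𝒯, T.Connected) ∧ (∀ S ∈ 𝒯, ∀ T ∈ 𝒯, ¬Overlapping S T) ∧
      ∀ T : G.Subgraph, T.Connected → (∀ S ∈ 𝒯, ¬Overlapping T S) → T ∈ 𝒯 :=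
  maximal_pairwise_iff (r := fun S T => ¬Overlapping S T) (fun _ _ h ho => h ho.symm)
    not_overlapping_self

theorem isAdmissibleTubing_iff {𝒮 : Set G.Subgraph} :
    IsAdmissibleTubing G 𝒮 ↔
      (∀ U ∈ 𝒮, U.Connected ∧ U.IsInduced) ∧ (∀ U ∈ 𝒮, ∀ W ∈ 𝒮, Compatible U W) ∧
        ∀ U : G.Subgraph, U.Connected ∧ U.IsInduced → (∀ W ∈ 𝒮, Compatible U W) → U ∈ 𝒮 :=
  maximal_pairwise_iff (r := Compatible) (fun _ _ => Compatible.symm) compatible_self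

theorem not_overlapping_singletonSubgraph (v : V) (T : G.Subgraph) :
    ¬Overlapping (G.singletonSubgraph v) T := by
  rintro ⟨⟨x, hx, hxT⟩, hn⟩
  obtain rfl : x = v := hx
  exact hn (Or.inl ((G.singletonSubgraph_le_iff x T).2 hxT))

theorem Overlapping.edgeSet_nonempty (h : Overlapping S T) (hS : S.Connected)
    (hT : T.Connected) : S.edgeSet.Nonempty ∧ T.edgeSet.Nonempty := by
  have key {S T : G.Subgraph} (h : Overlapping S T) (hS : S.Connected) : S.edgeSet.Nonempty := by
    by_contra he
    obtain ⟨v, rfl⟩ := hS.exists_eq_singletonSubgraph he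
    exact not_overlapping_singletonSubgraph v T h
  exact ⟨key h hS, key h.symm hT⟩

theorem IsCompleteTubing.singletonSubgraph_mem {𝒯 : Set G.Subgraph} (h : IsCompleteTubing G 𝒯)
    (v : V) : G.singletonSubgraph v ∈ 𝒯 :=
  (isCompleteTubing_iff.1 h).2.2 _ singletonSubgraph_connected fun T _ =>
    not_overlapping_singletonSubgraph v T

/-- Unless `U₁` is the single common vertex, that vertex has a neighbour in `U₁`, which gives an
edge from `U₁` into `U₂`. -/
theorem Compatible.nested_of_inter_nonempty (h : Compatible U₁ U₂) (hU₁ : U₁.Connected)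
    (hne : (U₁.verts ∩ U₂.verts).Nonempty) : Nested U₁ U₂ := by
  obtain ⟨e, he₁, he₂⟩ := hne
  by_cases hs : U₁.verts = {e}
  · rw [(eq_singletonSubgraph_iff_verts_eq U₁).2 hs]
    exact Or.inl ((G.singletonSubgraph_le_iff e U₂).2 he₂)
  obtain ⟨x, hx⟩ := hU₁.preconnected.exists_adj_of_verts_nontrivial
    ((Set.nontrivial_iff_ne_singleton he₁).2 hs) he₁
  by_contra hn
  exact h ⟨⟨x, e, (U₁.adj_sub hx).symm, hx.snd_mem, he₂⟩, hn⟩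

end Tubes

section LineGraph

variable {G : SimpleGraph V} {T T₁ T₂ : G.Subgraph} {U : G.lineGraph.Subgraph}

def edgeSpan (G : SimpleGraph V) (s : Set G.edgeSet) : G.Subgraph where
  verts := {v | ∃ e ∈ s, v ∈ (e : Sym2 V)}
  Adj u w := ∃ h : G.Adj u w, ⟨s(u, w), h⟩ ∈ s
  adj_sub h := h.1
  edge_vert h := ⟨_, h.2, Sym2.mem_mk_left _ _⟩
  symm := ⟨fun u w ⟨h, hm⟩ => ⟨h.symm, by simpa only [Sym2.eq_swap] using hm⟩⟩

theorem mem_edgeSet_edgeSpan {s : Set G.edgeSet} (e : G.edgeSet) :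
    (e : Sym2 V) ∈ (edgeSpan G s).edgeSet ↔ e ∈ s := by
  obtain ⟨⟨a, b⟩, he⟩ := e
  exact ⟨fun ⟨_, hm⟩ => hm, fun hm => ⟨he, hm⟩⟩

theorem edgeSpan_mono {s t : Set G.edgeSet} (h : s ⊆ t) : edgeSpan G s ≤ edgeSpan G t :=
  ⟨fun _ ⟨e, he, hve⟩ => ⟨e, h he, hve⟩, fun _ _ ⟨hadj, hm⟩ => ⟨hadj, h hm⟩⟩

theorem edgeSpan_edgeSet_nonempty {s : Set G.edgeSet} (hs : s.Nonempty) :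
    (edgeSpan G s).edgeSet.Nonempty :=
  let ⟨e, he⟩ := hs
  ⟨e, (mem_edgeSet_edgeSpan e).2 he⟩

theorem lineSubgraph_isInduced (T : G.Subgraph) : (lineSubgraph G T).IsInduced :=
  fun _ hv _ hw hadj => ⟨hv, hw, hadj⟩

theorem lineSubgraph_mono (h : T₁ ≤ T₂) : lineSubgraph G T₁ ≤ lineSubgraph G T₂ :=
  ⟨fun _ he => edgeSet_mono h he,
    fun _ _ ⟨h₁, h₂, hadj⟩ => ⟨edgeSet_mono h h₁, edgeSet_mono h h₂, hadj⟩⟩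

theorem lineSubgraph_edgeSpan (hU : U.IsInduced) : lineSubgraph G (edgeSpan G U.verts) = U := by
  have hverts : (lineSubgraph G (edgeSpan G U.verts)).verts = U.verts :=
    Set.ext mem_edgeSet_edgeSpan
  ext e f
  · rw [hverts]
  · refine ⟨fun ⟨he, hf, hadj⟩ => hU ?_ ?_ hadj, fun h => ?_⟩
    · exact (mem_edgeSet_edgeSpan e).1 he
    · exact (mem_edgeSet_edgeSpan f).1 hf
    · exact ⟨(mem_edgeSet_edgeSpan e).2 (U.edge_vert h),
        (mem_edgeSet_edgeSpan f).2 (U.edge_vert h.symm), U.adj_sub h⟩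

theorem edgeSpan_lineSubgraph_le (T : G.Subgraph) :
    edgeSpan G (lineSubgraph G T).verts ≤ T :=
  ⟨fun _ ⟨_, he, hve⟩ => T.mem_verts_of_mem_edge he hve, fun _ _ ⟨_, hm⟩ => hm⟩

theorem edgeSpan_lineSubgraph (hT : T.Connected) (he : T.edgeSet.Nonempty) :
    edgeSpan G (lineSubgraph G T).verts = T := by
  refine le_antisymm (edgeSpan_lineSubgraph_le T) ⟨fun v hv => ?_, fun u w h => ⟨T.adj_sub h, h⟩⟩
  obtain ⟨e, heT, hve⟩ := hT.exists_mem_edgeSet_of_mem_verts he hv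
  exact ⟨⟨e, T.edgeSet_subset heT⟩, heT, hve⟩

theorem lineSubgraph_le_lineSubgraph_iff (hT₁ : T₁.Connected) (he₁ : T₁.edgeSet.Nonempty) :
    lineSubgraph G T₁ ≤ lineSubgraph G T₂ ↔ T₁ ≤ T₂ := by
  refine ⟨fun h => ?_, lineSubgraph_mono⟩
  rw [← edgeSpan_lineSubgraph hT₁ he₁]
  exact (edgeSpan_mono h.1).trans (edgeSpan_lineSubgraph_le T₂)

theorem nested_lineSubgraph_iff (hT₁ : T₁.Connected) (he₁ : T₁.edgeSet.Nonempty)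
    (hT₂ : T₂.Connected) (he₂ : T₂.edgeSet.Nonempty) :
    Nested (lineSubgraph G T₁) (lineSubgraph G T₂) ↔ Nested T₁ T₂ := by
  rw [Nested, Nested, lineSubgraph_le_lineSubgraph_iff hT₁ he₁,
    lineSubgraph_le_lineSubgraph_iff hT₂ he₂]

theorem reachable_edgeSpan_of_walk {ee ff : U.verts} (p : U.coe.Walk ee ff) {v w : V}
    (hv : v ∈ (ee : Sym2 V)) (hw : w ∈ (ff : Sym2 V)) :
    (edgeSpan G U.verts).coe.Reachable ⟨v, ee, ee.2, hv⟩ ⟨w, ff, ff.2, hw⟩ := by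
  have endpoints {e : G.edgeSet} (he : e ∈ U.verts) {v w : V} (hv : v ∈ (e : Sym2 V))
      (hw : w ∈ (e : Sym2 V)) :
      (edgeSpan G U.verts).coe.Reachable ⟨v, e, he, hv⟩ ⟨w, e, he, hw⟩ := by
    obtain ⟨⟨a, b⟩, hab⟩ := e
    have hadj : (edgeSpan G U.verts).Adj a b := ⟨hab, he⟩
    rcases Sym2.mem_iff.1 hv with rfl | rfl <;> rcases Sym2.mem_iff.1 hw with rfl | rfl
    exacts [.rfl, Adj.reachable (G := (edgeSpan G U.verts).coe) hadj,
      Adj.reachable (G := (edgeSpan G U.verts).coe) hadj.symm, .rfl]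
  induction p generalizing v with
  | @nil u => exact endpoints u.2 hv hw
  | @cons x _ _ h _ ih =>
    obtain ⟨-, t, ht₁, ht₂⟩ := lineGraph_adj_iff_exists.1 (U.adj_sub h)
    exact (endpoints x.2 hv ht₁).trans (ih ht₂ hw)

theorem edgeSpan_connected (hU : U.Connected) : (edgeSpan G U.verts).Connected := by
  refine Subgraph.connected_iff.2 ⟨Subgraph.preconnected_iff.2 ?_, ?_⟩
  · rintro ⟨v, e, he, hve⟩ ⟨w, f, hf, hwf⟩
    obtain ⟨p⟩ := hU ⟨e, he⟩ ⟨f, hf⟩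
    exact reachable_edgeSpan_of_walk p hve hwf
  · obtain ⟨e, he⟩ := hU.nonempty
    exact ⟨_, e, he, Sym2.out_fst_mem (e : Sym2 V)⟩

theorem reachable_lineSubgraph_of_walk {a b : T.verts} (p : T.coe.Walk a b) {e f : G.edgeSet}
    (he : (e : Sym2 V) ∈ T.edgeSet) (hf : (f : Sym2 V) ∈ T.edgeSet)
    (hae : (a : V) ∈ (e : Sym2 V)) (hbf : (b : V) ∈ (f : Sym2 V)) :
    (lineSubgraph G T).coe.Reachable ⟨e, he⟩ ⟨f, hf⟩ := by
  have sharing {e f : G.edgeSet} (he : (e : Sym2 V) ∈ T.edgeSet) (hf : (f : Sym2 V) ∈ T.edgeSet)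
      {z : V} (hze : z ∈ (e : Sym2 V)) (hzf : z ∈ (f : Sym2 V)) :
      (lineSubgraph G T).coe.Reachable ⟨e, he⟩ ⟨f, hf⟩ := by
    obtain rfl | hef := eq_or_ne e f
    · rfl
    · exact Adj.reachable (G := (lineSubgraph G T).coe)
        ⟨he, hf, lineGraph_adj_iff_exists.2 ⟨hef, z, hze, hzf⟩⟩
  induction p generalizing e with
  | nil => exact sharing he hf hae hbf
  | @cons x y _ h _ ih =>
    have hxy : s(x.1, y.1) ∈ T.edgeSet := h
    exact (sharing he (f := ⟨_, T.edgeSet_subset hxy⟩) hxy hae (Sym2.mem_mk_left _ _)).trans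
      (ih hxy (Sym2.mem_mk_right _ _) hbf)

theorem lineSubgraph_connected (hT : T.Connected) (he : T.edgeSet.Nonempty) :
    (lineSubgraph G T).Connected := by
  refine Subgraph.connected_iff.2 ⟨Subgraph.preconnected_iff.2 ?_, ?_⟩
  · rintro ⟨e, he⟩ ⟨f, hf⟩
    have ha := T.mem_verts_of_mem_edge he (Sym2.out_fst_mem (e : Sym2 V))
    have hb := T.mem_verts_of_mem_edge hf (Sym2.out_fst_mem (f : Sym2 V))
    obtain ⟨p⟩ := hT ⟨_, ha⟩ ⟨_, hb⟩
    exact reachable_lineSubgraph_of_walk p he hf (Sym2.out_fst_mem _) (Sym2.out_fst_mem _)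
  · obtain ⟨e, heT⟩ := he
    exact ⟨⟨e, T.edgeSet_subset heT⟩, heT⟩

theorem compatible_lineSubgraph_iff (hT₁ : T₁.Connected) (he₁ : T₁.edgeSet.Nonempty)
    (hT₂ : T₂.Connected) (he₂ : T₂.edgeSet.Nonempty) :
    Compatible (lineSubgraph G T₁) (lineSubgraph G T₂) ↔ ¬Overlapping T₁ T₂ := by
  have hnested := nested_lineSubgraph_iff hT₁ he₁ hT₂ he₂
  refine ⟨fun hc ⟨⟨v, hv₁, hv₂⟩, hn⟩ => ?_, fun ho ⟨⟨e, f, hadj, he, hf⟩, hn⟩ => ?_⟩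
  · obtain ⟨e, he, hve⟩ := hT₁.exists_mem_edgeSet_of_mem_verts he₁ hv₁
    obtain ⟨f, hf, hvf⟩ := hT₂.exists_mem_edgeSet_of_mem_verts he₂ hv₂
    let e' : G.edgeSet := ⟨e, T₁.edgeSet_subset he⟩
    let f' : G.edgeSet := ⟨f, T₂.edgeSet_subset hf⟩
    refine hn (hnested.1 ?_)
    obtain hef | hef := eq_or_ne e' f'
    · exact hc.nested_of_inter_nonempty (lineSubgraph_connected hT₁ he₁)
        ⟨e', he, hef ▸ (hf : f' ∈ (lineSubgraph G T₂).verts)⟩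
    · by_contra hn'
      exact hc ⟨⟨e', f', lineGraph_adj_iff_exists.2 ⟨hef, v, hve, hvf⟩, he, hf⟩, hn'⟩
  · obtain ⟨-, z, hze, hzf⟩ := lineGraph_adj_iff_exists.1 hadj
    exact ho ⟨⟨z, T₁.mem_verts_of_mem_edge he hze, T₂.mem_verts_of_mem_edge hf hzf⟩,
      fun h => hn (hnested.2 h)⟩

end LineGraph

section Tubings

variable {G : SimpleGraph V} {𝒯 : Set G.Subgraph} {𝒮 : Set G.lineGraph.Subgraph}

def lineTubing (G : SimpleGraph V) (𝒯 : Set G.Subgraph) : Set G.lineGraph.Subgraph :=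
  lineSubgraph G '' {T ∈ 𝒯 | T.edgeSet.Nonempty}

def tubingOfLine (G : SimpleGraph V) (𝒮 : Set G.lineGraph.Subgraph) : Set G.Subgraph :=
  Set.range G.singletonSubgraph ∪ (fun U => edgeSpan G U.verts) '' 𝒮

theorem IsCompleteTubing.isAdmissibleTubing_lineTubing (h : IsCompleteTubing G 𝒯) :
    IsAdmissibleTubing G.lineGraph (lineTubing G 𝒯) := by
  obtain ⟨htube, hpair, hmax⟩ := isCompleteTubing_iff.1 h
  refine isAdmissibleTubing_iff.2 ⟨?_, ?_, fun U ⟨hUc, hUi⟩ hU => ?_⟩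
  · rintro _ ⟨T, ⟨hT, he⟩, rfl⟩
    exact ⟨lineSubgraph_connected (htube T hT) he, lineSubgraph_isInduced T⟩
  · rintro _ ⟨T₁, ⟨h₁, he₁⟩, rfl⟩ _ ⟨T₂, ⟨h₂, he₂⟩, rfl⟩
    exact (compatible_lineSubgraph_iff (htube T₁ h₁) he₁ (htube T₂ h₂) he₂).2 (hpair T₁ h₁ T₂ h₂)
  rw [← lineSubgraph_edgeSpan hUi] at hU ⊢
  have hTc := edgeSpan_connected hUc
  have hTe := edgeSpan_edgeSet_nonempty hUc.nonempty
  refine ⟨_, ⟨hmax _ hTc fun S hS ho => ?_, hTe⟩, rfl⟩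
  have hSe := (ho.edgeSet_nonempty hTc (htube S hS)).2
  exact (compatible_lineSubgraph_iff hTc hTe (htube S hS) hSe).1 (hU _ ⟨S, ⟨hS, hSe⟩, rfl⟩) ho

theorem IsAdmissibleTubing.isCompleteTubing_tubingOfLine
    (h : IsAdmissibleTubing G.lineGraph 𝒮) : IsCompleteTubing G (tubingOfLine G 𝒮) := by
  obtain ⟨htube, hpair, hmax⟩ := isAdmissibleTubing_iff.1 h
  have hconn : ∀ T ∈ tubingOfLine G 𝒮, T.Connected := by
    rintro _ (⟨v, rfl⟩ | ⟨U, hU, rfl⟩)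
    exacts [singletonSubgraph_connected, edgeSpan_connected (htube U hU).1]
  have hline : ∀ T ∈ tubingOfLine G 𝒮, T.edgeSet.Nonempty → lineSubgraph G T ∈ 𝒮 := by
    rintro _ (⟨v, rfl⟩ | ⟨U, hU, rfl⟩) he
    · simp [edgeSet_singletonSubgraph] at he
    · rwa [lineSubgraph_edgeSpan (htube U hU).2]
  refine isCompleteTubing_iff.2 ⟨hconn, fun A hA B hB ho => ?_, fun T hT hno => ?_⟩
  · obtain ⟨hAe, hBe⟩ := ho.edgeSet_nonempty (hconn A hA) (hconn B hB)
    exact (compatible_lineSubgraph_iff (hconn A hA) hAe (hconn B hB) hBe).1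
      (hpair _ (hline A hA hAe) _ (hline B hB hBe)) ho
  by_cases hTe : T.edgeSet.Nonempty
  · refine Or.inr ⟨_, hmax _ ⟨lineSubgraph_connected hT hTe, lineSubgraph_isInduced T⟩
      fun U hU => ?_, edgeSpan_lineSubgraph hT hTe⟩
    have hUc := edgeSpan_connected (htube U hU).1
    rw [← lineSubgraph_edgeSpan (htube U hU).2]
    exact (compatible_lineSubgraph_iff hT hTe hUc
      (edgeSpan_edgeSet_nonempty (htube U hU).1.nonempty)).2 (hno _ (Or.inr ⟨U, hU, rfl⟩))
  · obtain ⟨v, rfl⟩ := hT.exists_eq_singletonSubgraph hTe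
    exact Or.inl ⟨v, rfl⟩

theorem IsCompleteTubing.tubingOfLine_lineTubing (h : IsCompleteTubing G 𝒯) :
    tubingOfLine G (lineTubing G 𝒯) = 𝒯 := by
  have htube := (isCompleteTubing_iff.1 h).1
  ext T
  refine ⟨?_, fun hT => ?_⟩
  · rintro (⟨v, rfl⟩ | ⟨_, ⟨S, ⟨hS, he⟩, rfl⟩, rfl⟩)
    · exact h.singletonSubgraph_mem v
    · dsimp only
      rwa [edgeSpan_lineSubgraph (htube S hS) he]
  by_cases he : T.edgeSet.Nonempty
  · exact Or.inr ⟨_, ⟨T, ⟨hT, he⟩, rfl⟩, edgeSpan_lineSubgraph (htube T hT) he⟩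
  · obtain ⟨v, rfl⟩ := (htube T hT).exists_eq_singletonSubgraph he
    exact Or.inl ⟨v, rfl⟩

theorem lineTubing_tubingOfLine (h𝒮 : ∀ U ∈ 𝒮, U.Connected ∧ U.IsInduced) :
    lineTubing G (tubingOfLine G 𝒮) = 𝒮 := by
  ext U
  refine ⟨?_, fun hU => ?_⟩
  · rintro ⟨_, ⟨⟨v, rfl⟩ | ⟨W, hW, rfl⟩, he⟩, rfl⟩
    · simp [edgeSet_singletonSubgraph] at he
    · rwa [lineSubgraph_edgeSpan (h𝒮 W hW).2]
  · exact ⟨_, ⟨Or.inr ⟨U, hU, rfl⟩, edgeSpan_edgeSet_nonempty (h𝒮 U hU).1.nonempty⟩,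
      lineSubgraph_edgeSpan (h𝒮 U hU).2⟩

end Tubings

theorem completeTubing_equiv_admissible_line_general {V : Type*} (G : SimpleGraph V) :
    Set.BijOn (fun 𝒯 : Set G.Subgraph => lineSubgraph G '' {T ∈ 𝒯 | T.edgeSet.Nonempty})
      {𝒯 : Set G.Subgraph | IsCompleteTubing G 𝒯}
      {𝒮 : Set (G.lineGraph).Subgraph | IsAdmissibleTubing G.lineGraph 𝒮} :=
  Set.InvOn.bijOn (f' := tubingOfLine G)
    ⟨fun _ => IsCompleteTubing.tubingOfLine_lineTubing,
      fun _ h => lineTubing_tubingOfLine (isAdmissibleTubing_iff.1 h).1⟩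
    (fun _ => IsCompleteTubing.isAdmissibleTubing_lineTubing)
    (fun _ => IsAdmissibleTubing.isCompleteTubing_tubingOfLine)

/-- `𝒯 ↦ {L(T) : T ∈ 𝒯 with at least one edge}` is a bijection between
complete tubings of `G` and admissible tubings of `L(G)`. -/
theorem completeTubing_equiv_admissible_line {V : Type*} (G : SimpleGraph V)
    (hG : G.edgeSet.Nonempty) :
    Set.BijOn (fun 𝒯 : Set G.Subgraph => lineSubgraph G '' {T ∈ 𝒯 | T.edgeSet.Nonempty})
      {𝒯 : Set G.Subgraph | IsCompleteTubing G 𝒯}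
      {𝒮 : Set (G.lineGraph).Subgraph | IsAdmissibleTubing G.lineGraph 𝒮} :=
  completeTubing_equiv_admissible_line_general G

end Cosmo
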